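/- The word v = a w_k c_k w_{k-1} c_{k-1} ⋯ w_2 c_2 carefully synchronizes the automaton A_d(n): applying v to the full state set Q yields the singleton {q_0^1}, with all transitions defined along the way. -/
import Mathlib


/-- Alphabet of `A_d(n)`: letter `a`, letters `b_i` and letters `c_i`. -/
inductive LA | a | b (i : ℕ) | c (i : ℕ)
deriving DecidableEq

/-- Partial transition function of `A_d(n)` with `n = d·k`; the state `q_j^i` is
encoded as the pair `(i, j)` with `1 ≤ i ≤ k` and `0 ≤ j ≤ d-1`. -/
def δAn (d k : ℕ) : ℕ × ℕ → LA → Option (ℕ × ℕ) := fun p x =>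
  if ¬(1 ≤ p.1 ∧ p.1 ≤ k ∧ p.2 < d) then none else
  match x with
  | LA.a => some (p.1, 0)
  | LA.b l =>
      if ¬(1 ≤ l ∧ l ≤ k) then none
      else if p.1 = l then (if p.2 + 1 < d then some (p.1, p.2 + 1) else none)
      else if l < p.1 then some (p.1, p.2)
      else if p.2 = d - 1 then some (p.1, 0) else none
  | LA.c l =>
      if ¬(2 ≤ l ∧ l ≤ k) then none
      else if p.2 ≠ d - 1 then none
      else if l = p.1 then some (p.1 - 1, 0)
      else if p.1 < l then some (p.1, 0)
      else none

/-- The word `w_i`: `w_0 = ε`, `w_{i+1} = (w_i b_{i+1})^{d-1} w_i`. -/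
def wordA (d : ℕ) : ℕ → List LA
  | 0 => []
  | i + 1 => (List.replicate (d - 1) (wordA d i ++ [LA.b (i + 1)])).flatten ++ wordA d i

/-- `Q_r^m`: the set `{q_{j_1}^1, …, q_{j_m}^m}` where `(j_m,…,j_1)` are the base-`d`
digits of `r`. -/
def Qset (d m r : ℕ) : Finset (ℕ × ℕ) :=
  (Finset.Icc 1 m).image (fun i => (i, r / d ^ (i - 1) % d))

/-- One step of the power automaton. -/
def stepSet {Q A : Type*} [DecidableEq Q] (δ : Q → A → Option Q)
    (S : Finset Q) (x : A) : Option (Finset Q) :=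
  if ∀ q ∈ S, (δ q x).isSome then some (S.biUnion fun q => (δ q x).toFinset)
  else none

/-- Run of the power automaton on a word. -/
def runSet {Q A : Type*} [DecidableEq Q] (δ : Q → A → Option Q)
    (S : Finset Q) (w : List A) : Option (Finset Q) :=
  List.foldlM (stepSet δ) S w

/-- The word `v = a · w_k c_k · w_{k-1} c_{k-1} ⋯ w_2 c_2`. -/
def vAd (d k : ℕ) : List LA :=
  LA.a :: ((List.range' 2 (k - 1)).reverse.map (fun i => wordA d i ++ [LA.c i])).flatten

/-- The full state set of `A_d(n)`. -/
def Qfull (d k : ℕ) : Finset (ℕ × ℕ) :=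
  Finset.Icc 1 k ×ˢ Finset.range d

variable {d k i j l : ℕ}

lemma δ_a (h1 : 1 ≤ i) (h2 : i ≤ k) (h3 : j < d) :
    δAn d k (i, j) LA.a = some (i, 0) := by
  simp [δAn, h1, h2, h3]

lemma δ_b_lt (h0 : 1 ≤ l) (h1 : l < i) (h2 : i ≤ k) (h3 : j < d) :
    δAn d k (i, j) (LA.b l) = some (i, j) := by
  have : ¬ i = l := by omega
  simp [δAn, h1, h2, h3, this, h1.le.trans h2, h0]
  omega

lemma δ_b_eq (h1 : 1 ≤ i) (h2 : i ≤ k) (h3 : j + 1 < d) :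
    δAn d k (i, j) (LA.b i) = some (i, j + 1) := by
  simp [δAn, h1, h2, h3]
  omega

lemma δ_b_gt (hd : 1 ≤ d) (h1 : 1 ≤ i) (h2 : i < l) (h3 : l ≤ k) :
    δAn d k (i, d - 1) (LA.b l) = some (i, 0) := by
  have : ¬ i = l := by omega
  have h4 : d - 1 < d := by omega
  simp [δAn, h1, h2, h3, this, h4]
  omega

lemma δ_c_eq (hd : 1 ≤ d) (h1 : 2 ≤ i) (h2 : i ≤ k) :
    δAn d k (i, d - 1) (LA.c i) = some (i - 1, 0) := by
  have h4 : d - 1 < d := by omega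
  simp [δAn, h1, h2, h4]
  omega

lemma δ_c_gt (hd : 1 ≤ d) (h1 : 1 ≤ i) (h2 : i < l) (h3 : l ≤ k) :
    δAn d k (i, d - 1) (LA.c l) = some (i, 0) := by
  have : ¬ l = i := by omega
  have h4 : d - 1 < d := by omega
  simp [δAn, h1, h2, h3, this, h4]
  omega


variable {Q A : Type*} [DecidableEq Q] (δ : Q → A → Option Q)

lemma runSet_of_forall (w : List A) (S : Finset Q) (g : Q → Q)
    (h : ∀ q ∈ S, List.foldlM δ q w = some (g q)) :
    runSet δ S w = some (S.image g) := by
  induction w generalizing S g with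
  | nil =>
    have hg : ∀ q ∈ S, g q = q := by
      intro q hq
      have := h q hq
      simp only [List.foldlM_nil] at this
      exact (Option.some_injective _ this).symm
    have : S.image g = S := by
      ext q
      simp only [Finset.mem_image]
      constructor
      · rintro ⟨q', hq', rfl⟩
        rw [hg q' hq']; exact hq'
      · intro hq
        exact ⟨q, hq, hg q hq⟩
    rw [this]
    rfl
  | cons x w ih =>
    have hstep : ∀ q ∈ S, ∃ q', δ q x = some q' ∧
        List.foldlM δ q' w = some (g q) := by
      intro q hq
      have := h q hq
      simp only [List.foldlM_cons] at this
      cases hδ : δ q x with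
      | none => rw [hδ] at this; simp at this
      | some q' => rw [hδ] at this; simp at this; exact ⟨q', rfl, this⟩
    have hsome : ∀ q ∈ S, (δ q x).isSome := by
      intro q hq
      obtain ⟨q', hq', -⟩ := hstep q hq
      simp [hq']
    set S' := S.biUnion fun q => (δ q x).toFinset with hS'
    have h1 : runSet δ S (x :: w) = runSet δ S' w := by
      show (stepSet δ S x >>= fun t => List.foldlM (stepSet δ) t w) = _
      rw [stepSet, if_pos hsome]
      rfl
    set g' : Q → Q := fun q' => (List.foldlM δ q' w).getD q' with hg'
    have hmem : ∀ q' ∈ S', List.foldlM δ q' w = some (g' q') ∧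
        ∃ q ∈ S, g q = g' q' := by
      intro q' hq'
      simp only [hS', Finset.mem_biUnion, Option.mem_toFinset, Option.mem_def] at hq'
      obtain ⟨q, hq, hδ⟩ := hq'
      obtain ⟨q'', hq'', hrun⟩ := hstep q hq
      rw [hδ] at hq''
      cases hq''
      rw [hg']
      simp only [hrun, Option.getD_some]
      exact ⟨trivial, q, hq, rfl⟩
    have h2 := ih S' g' (fun q' hq' => (hmem q' hq').1)
    rw [h1, h2]
    congr 1
    ext y
    simp only [Finset.mem_image]
    constructor
    · rintro ⟨q', hq', rfl⟩
      obtain ⟨-, q, hq, hgq⟩ := hmem q' hq'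
      exact ⟨q, hq, hgq⟩
    · rintro ⟨q, hq, rfl⟩
      obtain ⟨q', hδ, hrun⟩ := hstep q hq
      have hq'S' : q' ∈ S' := by
        simp only [hS', Finset.mem_biUnion, Option.mem_toFinset, Option.mem_def]
        exact ⟨q, hq, hδ⟩
      refine ⟨q', hq'S', ?_⟩
      have := (hmem q' hq'S').1
      rw [hrun] at this
      exact (Option.some_injective _ this).symm

lemma runSet_append (u v : List A) (S : Finset Q) :
    runSet δ S (u ++ v) = runSet δ S u >>= fun S' => runSet δ S' v := by
  simp [runSet, List.foldlM_append]

section Words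
variable {d k : ℕ}

abbrev run1 (d k : ℕ) (p : ℕ × ℕ) (w : List LA) : Option (ℕ × ℕ) :=
  List.foldlM (δAn d k) p w

lemma run1_append (p : ℕ × ℕ) (u v : List LA) :
    run1 d k p (u ++ v) = run1 d k p u >>= fun p' => run1 d k p' v := by
  simp [run1, List.foldlM_append]

lemma run1_single (p : ℕ × ℕ) (x : LA) : run1 d k p [x] = δAn d k p x := by
  simp [run1]

lemma run_w_fix : ∀ m i j, m < i → i ≤ k → j < d →
    run1 d k (i, j) (wordA d m) = some (i, j) := by
  intro m
  induction m with
  | zero => intro i j _ _ _; simp [wordA, run1]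
  | succ m ih =>
    intro i j him hik hjd
    have hrep : ∀ n, run1 d k (i, j)
        ((List.replicate n (wordA d m ++ [LA.b (m + 1)])).flatten) = some (i, j) := by
      intro n
      induction n with
      | zero => simp [run1]
      | succ n ihn =>
        rw [List.replicate_succ, List.flatten_cons, run1_append, run1_append, ih i j (by omega) hik hjd]
        simp only [Option.bind_eq_bind, Option.bind_some]
        rw [run1_single, δ_b_lt (by omega) (by omega) hik hjd]
        simpa using ihn
    rw [wordA, run1_append, hrep]
    simpa using ih i j (by omega) hik hjd

lemma run_w_up (hd : 1 < d) : ∀ m, m ≤ k → ∀ i, 1 ≤ i → i ≤ m →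
    run1 d k (i, 0) (wordA d m) = some (i, d - 1) := by
  intro m
  induction m with
  | zero => omega
  | succ m ih =>
    intro hmk i hi him
    -- effect of n repetitions of (w_m ++ [b (m+1)])
    have hrepA : ∀ n i', 1 ≤ i' → i' ≤ m → run1 d k (i', 0)
        ((List.replicate n (wordA d m ++ [LA.b (m + 1)])).flatten) = some (i', 0) := by
      intro n i' h1 h2
      induction n with
      | zero => simp [run1]
      | succ n ihn =>
        rw [List.replicate_succ, List.flatten_cons, run1_append, run1_append, ih (by omega) i' h1 h2]
        simp only [Option.bind_eq_bind, Option.bind_some]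
        rw [run1_single, δ_b_gt (by omega) h1 (by omega) hmk]
        simpa using ihn
    have hrepB : ∀ n j, j + n ≤ d - 1 → run1 d k (m + 1, j)
        ((List.replicate n (wordA d m ++ [LA.b (m + 1)])).flatten) = some (m + 1, j + n) := by
      intro n
      induction n with
      | zero => intro j _; simp [run1]
      | succ n ihn =>
        intro j hj
        rw [List.replicate_succ, List.flatten_cons, run1_append, run1_append, run_w_fix m (m + 1) j (by omega) hmk (by omega)]
        simp only [Option.bind_eq_bind, Option.bind_some]
        rw [run1_single, δ_b_eq (by omega) hmk (by omega)]
        have h2 : j + 1 + n = j + (n + 1) := by omega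
        have := ihn (j + 1) (by omega)
        rw [h2] at this
        simpa using this
    rcases Nat.lt_or_ge i (m + 1) with hlt | hge
    · rw [wordA, run1_append, hrepA (d - 1) i hi (by omega)]
      simpa using ih (by omega) i hi (by omega)
    · have : i = m + 1 := by omega
      subst this
      rw [wordA, run1_append, hrepB (d - 1) 0 (by omega)]
      simp only [Nat.zero_add, Option.bind_some]
      exact run_w_fix m (m + 1) (d - 1) (by omega) hmk (by omega)

end Words

section Sets
variable {d k : ℕ}

def Snn (m : ℕ) : Finset (ℕ × ℕ) := (Finset.Icc 1 m).image fun i => (i, 0)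

lemma mem_Snn {m : ℕ} {p : ℕ × ℕ} : p ∈ Snn m ↔ 1 ≤ p.1 ∧ p.1 ≤ m ∧ p.2 = 0 := by
  cases p with | mk a b =>
  simp only [Snn, Finset.mem_image, Finset.mem_Icc, Prod.mk.injEq]
  constructor
  · rintro ⟨i, ⟨h1, h2⟩, rfl, rfl⟩; exact ⟨h1, h2, rfl⟩
  · rintro ⟨h1, h2, rfl⟩; exact ⟨a, ⟨h1, h2⟩, rfl, rfl⟩

lemma stage (hd : 1 < d) (m : ℕ) (hm : 1 ≤ m) (hmk : m + 1 ≤ k) :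
    runSet (δAn d k) (Snn (m + 1)) (wordA d (m + 1) ++ [LA.c (m + 1)]) = some (Snn m) := by
  have h := runSet_of_forall (δAn d k) (wordA d (m + 1) ++ [LA.c (m + 1)]) (Snn (m + 1))
    (fun p => (min p.1 m, 0)) ?_
  · rw [h]
    congr 1
    ext p
    simp only [Finset.mem_image, mem_Snn]
    constructor
    · rintro ⟨q, hq, rfl⟩
      exact ⟨le_min hq.1 hm, min_le_right _ _, rfl⟩
    · intro hp
      refine ⟨(p.1, 0), ⟨hp.1, by omega, rfl⟩, ?_⟩
      show (min p.1 m, 0) = p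
      rw [min_eq_left hp.2.1]
      exact Prod.ext rfl hp.2.2.symm
  · rintro ⟨a, b⟩ hq
    rw [mem_Snn] at hq
    obtain ⟨h1, h2, rfl⟩ := hq
    simp only at h1 h2
    show run1 d k (a, 0) _ = _
    rw [run1_append, run_w_up hd (m + 1) hmk a h1 h2]
    simp only [Option.bind_eq_bind, Option.bind_some]
    rw [run1_single]
    rcases Nat.lt_or_ge a (m + 1) with hlt | hge
    · rw [δ_c_gt (by omega) h1 hlt hmk]
      congr 2
      omega
    · have ha : a = m + 1 := by omega
      subst ha
      rw [δ_c_eq (by omega) (by omega) hmk]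
      congr 2
      omega

lemma loop (hd : 1 < d) : ∀ m, 1 ≤ m → m ≤ k →
    runSet (δAn d k) (Snn m)
      (((List.range' 2 (m - 1)).reverse.map (fun i => wordA d i ++ [LA.c i])).flatten)
      = some {(1, 0)} := by
  intro m
  induction m with
  | zero => omega
  | succ m ih =>
    intro _ hmk
    rcases Nat.eq_or_lt_of_le (show 1 ≤ m + 1 by omega) with h1 | h1
    · have hm0 : m = 0 := by omega
      subst hm0
      have : Snn 1 = {((1 : ℕ), (0 : ℕ))} := by
        ext p; rw [mem_Snn]; simp [Prod.ext_iff]; omega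
      simp [runSet, this]
    · have hm1 : 1 ≤ m := by omega
      have hrange : List.range' 2 (m + 1 - 1) = List.range' 2 (m - 1) ++ [m + 1] := by
        have h2 : m + 1 - 1 = (m - 1) + 1 := by omega
        rw [h2, List.range'_concat]
        congr 2
        omega
      rw [hrange, List.reverse_append, List.reverse_singleton, List.singleton_append,
        List.map_cons, List.flatten_cons]
      rw [runSet_append, stage hd m hm1 hmk]
      simp only [Option.bind_eq_bind, Option.bind_some]
      exact ih hm1 (by omega)

end Sets

/-- Lemma 2: `v` carefully synchronizes `A_d(n)`: applied to the full state set,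
all transitions are defined and the result is the singleton `{q_0^1}`. -/
theorem vAd_carefully_synchronizes (d k : ℕ) (hd : 1 < d) (hk : 1 ≤ k) :
    runSet (δAn d k) (Qfull d k) (vAd d k) = some {(1, 0)} := by
  have hcons : vAd d k = [LA.a] ++
      ((List.range' 2 (k - 1)).reverse.map (fun i => wordA d i ++ [LA.c i])).flatten := rfl
  rw [hcons, runSet_append]
  have h1 : runSet (δAn d k) (Qfull d k) [LA.a] = some (Snn k) := by
    have h := runSet_of_forall (δAn d k) [LA.a] (Qfull d k) (fun p => (p.1, 0)) ?_
    · rw [h]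
      congr 1
      ext p
      simp only [Finset.mem_image, Qfull, Finset.mem_product, Finset.mem_Icc,
        Finset.mem_range, mem_Snn]
      constructor
      · rintro ⟨q, ⟨⟨hq1, hq2⟩, hq3⟩, rfl⟩; exact ⟨hq1, hq2, rfl⟩
      · rintro ⟨h1, h2, h3⟩
        exact ⟨(p.1, 0), ⟨⟨h1, h2⟩, by omega⟩, Prod.ext rfl h3.symm⟩
    · rintro ⟨a, b⟩ hq
      simp only [Qfull, Finset.mem_product, Finset.mem_Icc, Finset.mem_range] at hq
      show run1 d k (a, b) [LA.a] = _
      rw [run1_single, δ_a hq.1.1 hq.1.2 hq.2]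
  rw [h1]
  simp only [Option.bind_eq_bind, Option.bind_some]
  exact loop hd k hk le_rfl
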